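/- arXiv:1101.0548 — 2 statements merged into one kernel-verified Lean document; each statement's English description precedes it below -/
import Mathlib

section
/- In an irredundant functional extension, for all f : X → X and all A ⊆ X, *f(*A) = *(f(A)); in particular *f is onto *X whenever f is onto X. -/
open Classical in
/-- A functional extension of a set `X` (with distinguished elements `0, 1`):
a superset `S ⊇ X` (given by the injection `inc`) together with a distinguished
extension `star f : S → S` of each `f : X → X`, satisfying `(comp)` and `(diag)`. -/
structure FunExt (X : Type*) (S : Type*) where
  inc : X → S
  inc_inj : Function.Injective inc
  zero : X
  one : X
  one_ne_zero : one ≠ zero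
  star : (X → X) → S → S
  star_extends : ∀ (f : X → X) (x : X), star f (inc x) = inc (f x)
  comp : ∀ (f g : X → X) (ξ : S), star g (star f ξ) = star (g ∘ f) ξ
  diag : ∀ (f g : X → X) (ξ : S),
    star (fun x => if f x = g x then one else zero) ξ =
      if star f ξ = star g ξ then inc one else inc zero

namespace FunExt

variable {X S : Type*}

open Classical in
/-- The characteristic function `χ_A : X → X` of a subset `A ⊆ X`. -/
noncomputable def chi (E : FunExt X S) (A : Set X) : X → X :=
  fun x => if x ∈ A then E.one else E.zero

/-- The extension `*A ⊆ S` of a subset `A ⊆ X`, defined via `*χ_A`. -/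
def starSet (E : FunExt X S) (A : Set X) : Set S :=
  { ξ | E.star (E.chi A) ξ = E.inc E.one }

/-- A functional extension is irredundant if every point is in the range of some `*f`. -/
def Irredundant (E : FunExt X S) : Prop :=
  ∀ ξ : S, ∃ (f : X → X) (η : S), E.star f η = ξ

/-- A functional extension is directed `(dir)`. -/
def Directed (E : FunExt X S) : Prop :=
  ∀ ξ η : S, ∃ (f g : X → X) (ζ : S), E.star f ζ = ξ ∧ E.star g ζ = η

end FunExt

namespace FunExt

variable {X S : Type*}

lemma inc_one_ne_inc_zero (E : FunExt X S) : E.inc E.one ≠ E.inc E.zero :=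
  fun h => E.one_ne_zero (E.inc_inj h)

lemma star_const (E : FunExt X S) (c : X) (ξ : S) :
    E.star (fun _ => c) ξ = E.inc c := by
  have h1 : E.star (fun _ => E.one) ξ = E.inc E.one := by
    have hd := E.diag id id ξ
    simpa using hd
  have h2 := E.comp (fun _ => E.one) (fun _ => c) ξ
  rw [h1, E.star_extends] at h2
  exact h2.symm

lemma starSet_mono (E : FunExt X S) {A B : Set X} (hAB : A ⊆ B) :
    E.starSet A ⊆ E.starSet B := by
  classical
  intro ξ hξ
  have hξ' : E.star (E.chi A) ξ = E.inc E.one := hξ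
  rcases A.eq_empty_or_nonempty with rfl | ⟨b₀, hb₀⟩
  · exfalso
    have hA : E.chi (∅ : Set X) = fun _ => E.zero := by
      funext x; simp [chi]
    rw [hA, E.star_const] at hξ'
    exact E.inc_one_ne_inc_zero hξ'.symm
  · set ψ : X → X := fun x => if x ∈ A then b₀ else x with hψ
    set η := E.star ψ ξ with hη
    have step1 : E.star (fun x => if x = b₀ then E.one else E.zero) η = E.inc E.one := by
      have hcomp := E.comp ψ (fun x => if x = b₀ then E.one else E.zero) ξ
      have heq : ((fun x => if x = b₀ then E.one else E.zero) ∘ ψ) = E.chi A := by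
        funext x
        by_cases hx : x ∈ A
        · simp [Function.comp, hψ, hx, chi]
        · have hxb : x ≠ b₀ := fun h => hx (h ▸ hb₀)
          simp [Function.comp, hψ, hx, chi, hxb]
      rw [heq, ← hη] at hcomp
      rw [hcomp, hξ']
    have step2 : E.star id η = E.inc b₀ := by
      have hd := E.diag id (fun _ => b₀) η
      rw [E.star_const] at hd
      simp only [id_eq] at hd
      rw [step1] at hd
      by_contra hne
      rw [if_neg hne] at hd
      exact E.inc_one_ne_inc_zero hd
    have step3 : E.star (E.chi B) η = E.inc E.one := by
      have hcomp := E.comp id (E.chi B) η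
      rw [step2, E.star_extends] at hcomp
      have hid : (E.chi B ∘ id) = E.chi B := rfl
      rw [hid] at hcomp
      have hb : E.chi B b₀ = E.one := by simp [chi, hAB hb₀]
      rw [hb] at hcomp
      exact hcomp.symm
    have heq2 : (E.chi B ∘ ψ) = E.chi B := by
      funext x
      by_cases hx : x ∈ A
      · simp [Function.comp, hψ, hx, chi, hAB hx, hAB hb₀]
      · simp [Function.comp, hψ, hx]
    have hcomp2 := E.comp ψ (E.chi B) ξ
    rw [← hη, step3, heq2] at hcomp2
    exact hcomp2.symm

lemma mem_starSet_univ (E : FunExt X S) (ξ : S) :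
    ξ ∈ E.starSet (Set.univ : Set X) := by
  show E.star (E.chi Set.univ) ξ = E.inc E.one
  have hu : E.chi (Set.univ : Set X) = fun _ => E.one := by
    funext x; simp [chi]
  rw [hu, E.star_const]

lemma star_image_eq (E : FunExt X S) (h : E.Irredundant)
    (f : X → X) (A : Set X) :
    E.star f '' E.starSet A = E.starSet (f '' A) := by
  classical
  rcases A.eq_empty_or_nonempty with rfl | ⟨a₀, ha₀⟩
  · have hempty : E.starSet (∅ : Set X) = ∅ := by
      ext ξ
      simp only [Set.mem_empty_iff_false, iff_false]
      intro hc
      have hc' : E.star (E.chi (∅ : Set X)) ξ = E.inc E.one := hc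
      have hA : E.chi (∅ : Set X) = fun _ => E.zero := by
        funext x; simp [chi]
      rw [hA, E.star_const] at hc'
      exact E.inc_one_ne_inc_zero hc'.symm
    rw [Set.image_empty, hempty, Set.image_empty]
  · apply Set.Subset.antisymm
    · rintro ζ ⟨ξ, hξ, rfl⟩
      show E.star (E.chi (f '' A)) (E.star f ξ) = E.inc E.one
      rw [E.comp]
      have heq : (E.chi (f '' A) ∘ f) = E.chi (f ⁻¹' (f '' A)) := by
        funext x
        by_cases hx : f x ∈ f '' A
        · simp [Function.comp, chi, hx]
        · simp [Function.comp, chi, hx]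
      rw [heq]
      exact E.starSet_mono (Set.subset_preimage_image f A) hξ
    · intro ζ hζ
      obtain ⟨k, η, rfl⟩ := h ζ
      set g : X → X := fun y => if hy : y ∈ f '' A then ((Set.mem_image f A y).mp hy).choose else a₀ with hg
      have hgA : ∀ y, g y ∈ A := by
        intro y
        by_cases hy : y ∈ f '' A
        · simp only [hg, dif_pos hy]
          exact ((Set.mem_image f A y).mp hy).choose_spec.1
        · simp only [hg, dif_neg hy]
          exact ha₀
      have hfg : ∀ y ∈ f '' A, f (g y) = y := by
        intro y hy
        simp only [hg, dif_pos hy]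
        exact ((Set.mem_image f A y).mp hy).choose_spec.2
      refine ⟨E.star g (E.star k η), ?_, ?_⟩
      · show E.star (E.chi A) (E.star g (E.star k η)) = E.inc E.one
        rw [E.comp]
        have hone : (E.chi A ∘ g) = fun _ => E.one := by
          funext y
          simp [Function.comp, chi, hgA y]
        rw [hone, E.star_const]
      · rw [E.comp, E.comp]
        -- goal : E.star ((f ∘ g) ∘ k) η = E.star k η
        have hDiag := E.diag ((f ∘ g) ∘ k) k η
        have hmem : E.star (fun x => if ((f ∘ g) ∘ k) x = k x then E.one else E.zero) η
            = E.inc E.one := by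
          have h1 : η ∈ E.starSet (k ⁻¹' (f '' A)) := by
            have hζ' : E.star (E.chi (f '' A)) (E.star k η) = E.inc E.one := hζ
            rw [E.comp] at hζ'
            show E.star (E.chi (k ⁻¹' (f '' A))) η = E.inc E.one
            have heq' : (E.chi (f '' A) ∘ k) = E.chi (k ⁻¹' (f '' A)) := by
              funext x
              by_cases hx : k x ∈ f '' A
              · simp [Function.comp, chi, hx]
              · simp [Function.comp, chi, hx]
            rw [← heq']
            exact hζ'
          have hsub : k ⁻¹' (f '' A) ⊆ {x | f (g (k x)) = k x} := by
            intro x hx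
            exact hfg _ hx
          have h2 := E.starSet_mono hsub h1
          have h3 : E.chi {x | f (g (k x)) = k x}
              = fun x => if ((f ∘ g) ∘ k) x = k x then E.one else E.zero := by
            funext x
            by_cases hx : f (g (k x)) = k x
            · simp [chi, hx, Function.comp]
            · simp [chi, hx, Function.comp]
          rw [← h3]
          exact h2
        have hif := hDiag.symm.trans hmem
        by_contra hne
        rw [if_neg hne] at hif
        exact E.inc_one_ne_inc_zero hif.symm

end FunExt

/-- in an irredundant functional extension, `*f(*A) = *(f(A))`;
in particular `*f` is onto whenever `f` is onto. -/
theorem stmt_10 {X S : Type*} (E : FunExt X S) (h : E.Irredundant)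
    (f : X → X) (A : Set X) :
    E.star f '' E.starSet A = E.starSet (f '' A) ∧
    (Function.Surjective f → Function.Surjective (E.star f)) := by
  refine ⟨E.star_image_eq h f A, ?_⟩
  intro hf ζ
  have h1 : ζ ∈ E.starSet (f '' (Set.univ : Set X)) := by
    rw [Set.image_univ, hf.range_eq]
    exact E.mem_starSet_univ ζ
  rw [← E.star_image_eq h f Set.univ] at h1
  obtain ⟨ξ, -, hξ⟩ := h1
  exact ⟨ξ, hξ⟩
end

section
/- In an irredundant functional extension, if f : X → X is injective on A ⊆ X, then *f is injective on *A. -/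
namespace FunExt

variable {X S : Type*}

lemma star_const_one (E : FunExt X S) (ξ : S) :
    E.star (fun _ => E.one) ξ = E.inc E.one := by
  have hd := E.diag id id ξ
  simp only [id, if_pos rfl] at hd
  exact hd

lemma starSet_empty (E : FunExt X S) : E.starSet (∅ : Set X) = ∅ := by
  ext ξ
  simp only [Set.mem_empty_iff_false, iff_false]
  intro hξ
  have hξ2 : E.star (E.chi (∅ : Set X)) ξ = E.inc E.one := hξ
  have hchi : E.chi (∅ : Set X) = fun _ => E.zero := by
    funext x; simp [FunExt.chi]
  rw [hchi] at hξ2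
  classical
  set s : X → X := fun y => if y = E.zero then E.one else E.zero with hs
  have h1 := E.comp (fun _ => E.zero) s ξ
  rw [hξ2, E.star_extends] at h1
  have h2 : s ∘ (fun (_ : X) => E.zero) = fun (_ : X) => E.one := by
    funext x; simp [hs]
  rw [h2, E.star_const_one] at h1
  have h3 : s E.one = E.zero := by simp [hs, E.one_ne_zero]
  rw [h3] at h1
  exact E.one_ne_zero (E.inc_inj h1.symm)

lemma star_id (E : FunExt X S) (h : E.Irredundant) (ξ : S) :
    E.star id ξ = ξ := by
  obtain ⟨u, η, hu⟩ := h ξ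
  rw [← hu, E.comp]
  rfl

end FunExt

/-- in an irredundant functional extension, if `f` is injective
on `A ⊆ X` then `*f` is injective on `*A`. -/
theorem stmt_11 {X S : Type*} (E : FunExt X S) (h : E.Irredundant)
    (f : X → X) (A : Set X) (hf : Set.InjOn f A) :
    Set.InjOn (E.star f) (E.starSet A) := by
  classical
  rcases A.eq_empty_or_nonempty with hAe | ⟨a₀, ha₀⟩
  · subst hAe
    rw [E.starSet_empty]
    exact Set.injOn_empty _
  · set g : X → X := fun z => if hz : ∃ a ∈ A, f a = z then hz.choose else a₀ with hg
    have hgf : (fun x => if (g ∘ f) x = id x then E.one else E.zero) = E.chi A := by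
      funext x
      simp only [Function.comp, id, hg]
      by_cases hx : x ∈ A
      · have hex : ∃ a ∈ A, f a = f x := ⟨x, hx, rfl⟩
        rw [dif_pos hex]
        have hsp := hex.choose_spec
        have hxe : hex.choose = x := hf hsp.1 hx hsp.2
        simp [FunExt.chi, hx, hxe]
      · simp only [FunExt.chi, if_neg hx]
        by_cases hex : ∃ a ∈ A, f a = f x
        · rw [dif_pos hex]
          have hsp := hex.choose_spec
          have hne : hex.choose ≠ x := fun e => hx (e ▸ hsp.1)
          simp [hne]
        · rw [dif_neg hex]
          have hne : a₀ ≠ x := fun e => hx (e ▸ ha₀)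
          simp [hne]
    have key : ∀ ζ ∈ E.starSet A, E.star g (E.star f ζ) = ζ := by
      intro ζ hζ
      have hd := E.diag (g ∘ f) id ζ
      rw [hgf] at hd
      have hζ' : E.star (E.chi A) ζ = E.inc E.one := hζ
      rw [hζ'] at hd
      by_cases hc : E.star (g ∘ f) ζ = E.star id ζ
      · rw [E.comp, hc, E.star_id h]
      · rw [if_neg hc] at hd
        exact absurd (E.inc_inj hd) E.one_ne_zero
    intro ξ hξ η hη hfe
    have h1 := key ξ hξ
    rw [hfe, key η hη] at h1
    exact h1.symm
end
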